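/- Every computably enumerable set A ⊆ ℕ has, for any real ε > 0, a computable subset B ⊆ A with lower density strictly greater than the lower density of A minus ε. -/

import Mathlib

open Filter

noncomputable def pdens (S : Set ℕ) (n : ℕ) : ℝ := (S ∩ Set.Iio n).ncard / n

noncomputable def lowerDensity (S : Set ℕ) : ℝ := liminf (pdens S) atTop

noncomputable def upperDensity (S : Set ℕ) : ℝ := limsup (pdens S) atTop

/-!
Enumerate `A` in monotone primitive recursive stages `E s` and fix a rational `q` with
`|A ∩ [0, m)| ≥ q m` for all `m ≥ N`. Let `g k` be the first stage at which `E (g k)` already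
satisfies this bound for every `m < k²`, and put `x ∈ B ↔ x ∈ E (g x)`. Then `g` is computable
and monotone, so `B` is a computable subset of `A` containing every `x ≥ k` of `E (g k)`. Taking
`k = ⌊√n⌋ + 1` gives `|B ∩ [0, n)| ≥ q n - √n - 1`, so the lower density of `B` is at least `q`.
-/

open Set Topology Nat.Partrec

lemma ncard_inter_Iio_le (S : Set ℕ) (n : ℕ) : (S ∩ Iio n).ncard ≤ n :=
  (ncard_inter_le_ncard_right S _ (finite_Iio n)).trans_eq (ncard_Iio_nat n)

lemma pdens_nonneg (S : Set ℕ) (n : ℕ) : 0 ≤ pdens S n := by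
  unfold pdens; positivity

lemma pdens_le_one (S : Set ℕ) (n : ℕ) : pdens S n ≤ 1 :=
  div_le_one_of_le₀ (mod_cast ncard_inter_Iio_le S n) n.cast_nonneg

lemma le_lowerDensity_of_tendsto {S : Set ℕ} {q : ℝ} {e : ℕ → ℝ} (he : Tendsto e atTop (𝓝 0))
    (h : ∀ᶠ n in atTop, q - e n ≤ pdens S n) : q ≤ lowerDensity S := by
  have hlim : Tendsto (fun n => q - e n) atTop (𝓝 q) := by
    simpa using tendsto_const_nhds.sub he
  calc q = liminf (fun n => q - e n) atTop := hlim.liminf_eq.symm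
    _ ≤ lowerDensity S := liminf_le_liminf h hlim.isBoundedUnder_ge
        (isBoundedUnder_of ⟨1, pdens_le_one S⟩).isCoboundedUnder_ge

lemma tendsto_sqrt_succ_div_atTop :
    Tendsto (fun n : ℕ => ((n.sqrt + 1 : ℕ) : ℝ) / n) atTop (𝓝 0) := by
  have hsqrt : Tendsto Nat.sqrt atTop atTop :=
    Monotone.tendsto_atTop_atTop (fun _ _ => Nat.sqrt_le_sqrt)
      fun b => ⟨b ^ 2, (Nat.sqrt_eq' b).ge⟩
  refine squeeze_zero' (Eventually.of_forall fun n => by positivity) ?_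
    ((tendsto_const_nhds (x := (2 : ℝ))).div_atTop (tendsto_natCast_atTop_atTop.comp hsqrt))
  filter_upwards [eventually_ge_atTop 1] with n hn
  have hs : 1 ≤ n.sqrt := Nat.le_sqrt.2 hn
  have hsn : n.sqrt * n.sqrt ≤ n := Nat.sqrt_le n
  rw [Function.comp_apply, div_le_div_iff₀ (by positivity) (by positivity)]
  -- `(s + 1) s ≤ 2 s² ≤ 2 n` for `s = Nat.sqrt n ≥ 1`
  exact_mod_cast (by nlinarith : (n.sqrt + 1) * n.sqrt ≤ 2 * n)

lemma nnratCast_le_natCast_div_iff {q : ℚ≥0} {c m : ℕ} (hm : 0 < m) :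
    (q : ℝ) ≤ c / m ↔ q.num * m ≤ q.den * c := by
  rw [NNRat.cast_def, div_le_div_iff₀ (mod_cast q.den_pos) (mod_cast hm), mul_comm (c : ℝ)]
  norm_cast

lemma exists_nnrat_gt_sub_eventually_le_pdens (S : Set ℕ) {ε : ℝ} (hε : 0 < ε) :
    ∃ q : ℚ≥0, lowerDensity S - ε < q ∧ ∀ᶠ m in atTop, (q : ℝ) ≤ pdens S m := by
  by_cases hneg : lowerDensity S - ε < 0
  · exact ⟨0, by simpa using hneg, Eventually.of_forall fun m => by simpa using pdens_nonneg S m⟩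
  obtain ⟨r, hεr, hr⟩ := exists_rat_btwn (sub_lt_self (lowerDensity S) hε)
  have hr0 : 0 ≤ r := by exact_mod_cast (not_lt.1 hneg).trans hεr.le
  have hcast : ((r.toNNRat : ℚ≥0) : ℝ) = r := by
    rw [← Rat.cast_nnratCast, Rat.coe_toNNRat r hr0]
  refine ⟨r.toNNRat, ?_⟩
  rw [hcast]
  exact ⟨hεr, (eventually_lt_of_lt_liminf hr (isBoundedUnder_of ⟨0, pdens_nonneg S⟩)).mono
    fun _ => le_of_lt⟩

lemma REPred.exists_monotone_primrec_stages {A : Set ℕ} (hA : REPred (· ∈ A)) :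
    ∃ E : ℕ → Set ℕ, Monotone E ∧ PrimrecRel (fun s x => x ∈ E s) ∧ ⋃ s, E s = A := by
  obtain ⟨c, hc⟩ := Code.exists_code.1 hA
  refine ⟨fun s => {x | (Code.evaln s c x).isSome}, fun s t hst x hx => ?_, ?_, ?_⟩
  · obtain ⟨y, hy⟩ := Option.isSome_iff_exists.1 hx
    exact Option.isSome_iff_exists.2 ⟨y, Code.evaln_mono hst hy⟩
  · refine Primrec₂.primrecRel (Primrec.option_isSome.comp
      (Code.primrec_evaln.comp ((Primrec.fst.pair (Primrec.const c)).pair Primrec.snd)) |>.of_eq ?_)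
    simp
  · ext x
    have : x ∈ A ↔ (Code.eval c x).Dom := by simp [hc, Part.assert]
    simp only [mem_iUnion, mem_ofPred_eq, this, Part.dom_iff_mem, Code.evaln_complete,
      Option.isSome_iff_exists]
    exact exists_comm

lemma primrec₂_ncard_inter_Iio {E : ℕ → Set ℕ} (hE : PrimrecRel fun s x => x ∈ E s) :
    Primrec₂ fun s m => (E s ∩ Iio m).ncard := by
  classical
  have hmem : PrimrecRel fun x s => x ∈ E s := hE.comp Primrec.snd Primrec.fst
  have hfilter : Primrec₂ fun s m => ((List.range m).filter (· ∈ E s)).length :=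
    Primrec.list_length.comp
      (hmem.listFilter.comp (Primrec.list_range.comp Primrec.snd) Primrec.fst)
  refine hfilter.of_eq fun s m => ?_
  rw [← List.toFinset_card_of_nodup (List.nodup_range.filter _), ← ncard_coe_finset]
  congr 1
  ext x
  simp [and_comm]

section Stages

variable {E : ℕ → Set ℕ}

lemma Monotone.exists_iUnion_inter_Iio_subset (hE : Monotone E) (n : ℕ) :
    ∃ s, (⋃ s, E s) ∩ Iio n ⊆ E s := by
  have hfin : ((⋃ s, E s) ∩ Iio n).Finite := (finite_Iio n).inter_of_right _
  simpa using hE.directed_le.exists_mem_subset_of_finset_subset_biUnion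
    (s := hfin.toFinset) (by simp)

lemma ncard_inter_Iio_le_ncard_diagonal_add (hE : Monotone E) {g : ℕ → ℕ} (hg : Monotone g)
    (k n : ℕ) : (E (g k) ∩ Iio n).ncard ≤ ({x | x ∈ E (g x)} ∩ Iio n).ncard + k := by
  have hsub : E (g k) ∩ Iio n ⊆ ({x | x ∈ E (g x)} ∩ Iio n) ∪ Iio k := by
    rintro x ⟨hx, hxn⟩
    rcases lt_or_ge x k with hxk | hkx
    · exact Or.inr hxk
    · exact Or.inl ⟨hE (hg hkx) hx, hxn⟩
  calc (E (g k) ∩ Iio n).ncard ≤ (({x | x ∈ E (g x)} ∩ Iio n) ∪ Iio k).ncard :=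
        ncard_le_ncard hsub (((finite_Iio n).inter_of_right _).union (finite_Iio k))
    _ ≤ _ := (ncard_union_le _ _).trans_eq (by rw [ncard_Iio_nat])

theorem exists_computablePred_subset_of_monotone_stages (hE : Monotone E)
    (hEp : PrimrecRel fun s x => x ∈ E s) {N a b : ℕ}
    (hab : ∀ m ≥ N, a * m ≤ b * ((⋃ s, E s) ∩ Iio m).ncard) :
    ∃ B ⊆ ⋃ s, E s, ComputablePred (· ∈ B) ∧
      ∀ n ≥ N, a * n ≤ b * ((B ∩ Iio n).ncard + (n.sqrt + 1)) := by
  classical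
  let R (k s : ℕ) : Prop := ∀ m < k * k, N ≤ m → a * m ≤ b * (E s ∩ Iio m).ncard
  have hR : ∀ k, ∃ s, R k s := fun k => by
    obtain ⟨s, hs⟩ := hE.exists_iUnion_inter_Iio_subset (k * k)
    refine ⟨s, fun m hm hNm => (hab m hNm).trans (Nat.mul_le_mul_left b (ncard_le_ncard ?_))⟩
    exact fun x ⟨hx, hxm⟩ => ⟨hs ⟨hx, lt_trans hxm hm⟩, hxm⟩
  have hRp : PrimrecRel R := by
    have hbound : PrimrecRel fun (m : ℕ) (ks : ℕ × ℕ) =>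
        N ≤ m → a * m ≤ b * (E ks.2 ∩ Iio m).ncard :=
      ((Primrec.nat_le.comp (Primrec.const N) Primrec.fst).not.or
        (Primrec.nat_le.comp (Primrec.nat_mul.comp (Primrec.const a) Primrec.fst)
          (Primrec.nat_mul.comp (Primrec.const b) ((primrec₂_ncard_inter_Iio hEp).comp
            (Primrec.snd.comp Primrec.snd) Primrec.fst)))).of_eq fun _ => imp_iff_not_or.symm
    have hrange : Primrec fun ks : ℕ × ℕ => List.range (ks.1 * ks.1) :=
      Primrec.list_range.comp (Primrec.nat_mul.comp Primrec.fst Primrec.fst)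
    exact (hbound.forall_mem_list.comp hrange Primrec.id).of_eq fun _ => by simp [R]
  let g (k : ℕ) : ℕ := Nat.find (hR k)
  have hg : Monotone g := fun k k' hkk' => Nat.find_mono fun s hs m hm =>
    hs m (hm.trans_le (Nat.mul_le_mul hkk' hkk'))
  have hgc : Computable g := Computable.find hRp.computablePred hR
  refine ⟨{x | x ∈ E (g x)}, fun x hx => mem_iUnion.2 ⟨_, hx⟩,
    Computable.computablePred (hEp.decide.to_comp.comp hgc Computable.id), fun n hn => ?_⟩
  calc a * n ≤ b * (E (g (n.sqrt + 1)) ∩ Iio n).ncard :=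
        Nat.find_spec (hR (n.sqrt + 1)) n (Nat.lt_succ_sqrt n) hn
    _ ≤ _ := Nat.mul_le_mul_left b (ncard_inter_Iio_le_ncard_diagonal_add hE hg _ n)

end Stages

theorem REPred.exists_computablePred_subset_le_lowerDensity {A : Set ℕ} (hA : REPred (· ∈ A))
    {q : ℚ≥0} (hq : ∀ᶠ m in atTop, (q : ℝ) ≤ pdens A m) :
    ∃ B ⊆ A, ComputablePred (· ∈ B) ∧ (q : ℝ) ≤ lowerDensity B := by
  obtain ⟨E, hE, hEp, rfl⟩ := hA.exists_monotone_primrec_stages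
  obtain ⟨N, hN⟩ := eventually_atTop.1 (hq.and (eventually_gt_atTop 0))
  obtain ⟨B, hBA, hB, hBN⟩ := exists_computablePred_subset_of_monotone_stages hE hEp
    fun m hm => (nnratCast_le_natCast_div_iff (hN m hm).2).1 (hN m hm).1
  refine ⟨B, hBA, hB, le_lowerDensity_of_tendsto tendsto_sqrt_succ_div_atTop ?_⟩
  filter_upwards [eventually_ge_atTop N, eventually_gt_atTop 0] with n hNn hn
  have hqn := (nnratCast_le_natCast_div_iff hn).2 (hBN n hNn)
  rw [Nat.cast_add, add_div] at hqn
  rw [pdens]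
  linarith

theorem stmt14 (A : Set ℕ) (hA : REPred (· ∈ A)) (ε : ℝ) (hε : 0 < ε) :
    ∃ B : Set ℕ, ComputablePred (· ∈ B) ∧ B ⊆ A ∧ lowerDensity A - ε < lowerDensity B := by
  obtain ⟨q, hεq, hq⟩ := exists_nnrat_gt_sub_eventually_le_pdens A hε
  obtain ⟨B, hBA, hB, hqB⟩ := hA.exists_computablePred_subset_le_lowerDensity hq
  exact ⟨B, hB, hBA, hεq.trans_le hqB⟩
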